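/- Let A be a unital C*-algebra, let n be a natural number, and let (K, ρ) be a unital *-representation of M_n(A). Let {E_jk} be the standard matrix units of M_n ⊆ M_n(A), let H = ρ(E_11)K (a closed subspace of K), and define the unital *-representation π of A on H by π(a) = ρ(a ⊗ E_11) restricted to H. Then (K, ρ) is unitarily equivalent to (H^⊕n, π_n), where π_n is the representation of M_n(A) on the Hilbert space direct sum H^⊕n given by letting the operator matrix (π(C_jk)) act on H^⊕n; that is, there is a unitary W : K → H^⊕n with W ρ(C) W* = π_n(C) for all C ∈ M_n(A). -/

import Mathlib

/-!
The operators `eᵢⱼ = ρ(Eᵢⱼ)` form a system of matrix units on `K`: `eᵢⱼ eⱼₖ = eᵢₖ`,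
`eᵢⱼ* = eⱼᵢ` and `∑ᵢ eᵢᵢ = 1`. Hence `W ξ = (e₁ᵢ ξ)ᵢ` maps `K` into `H^⊕n`, preserves inner
products because `∑ᵢ ⟪e₁ᵢ ξ, e₁ᵢ η⟫ = ⟪ξ, ∑ᵢ eᵢᵢ η⟫`, and is onto because `h ↦ ∑ᵢ eᵢ₁ hᵢ` is a
right inverse. It intertwines `ρ` with the ampliation since `e₁ᵢ ρ(C) eⱼⱼ = ρ(Cᵢⱼ ⊗ E₁₁) e₁ⱼ`.
-/

/-- The range of the projection `ρ(E₀₀)` (the corner subspace `ρ(E₁₁)K` of the paper),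
for a unital *-representation `ρ` of `M_n(A)` on `K`. -/
noncomputable def cornerRange {A : Type*} [CStarAlgebra A] {n : ℕ}
    {K : Type*} [NormedAddCommGroup K] [InnerProductSpace ℂ K] [CompleteSpace K]
    (ρ : Matrix (Fin n) (Fin n) A →⋆ₐ[ℂ] (K →L[ℂ] K)) (i0 : Fin n) : Submodule ℂ K :=
  LinearMap.range ((ρ (Matrix.single i0 i0 (1 : A)) : K →L[ℂ] K) : K →ₗ[ℂ] K)

open Matrix

section MatrixUnits

variable {A : Type*} [Semiring A] [StarRing A] [Algebra ℂ A]
  {n : Type*} [Fintype n] [DecidableEq n]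
  {K : Type*} [NormedAddCommGroup K] [InnerProductSpace ℂ K] [CompleteSpace K]
  (ρ : Matrix n n A →⋆ₐ[ℂ] (K →L[ℂ] K))

theorem map_single_apply_map_single (i j k : n) (a b : A) (x : K) :
    ρ (single i j a) (ρ (single j k b) x) = ρ (single i k (a * b)) x := by
  rw [← mul_apply_eq_comp, ← map_mul, single_mul_single_same]

theorem map_single_apply_map_single_of_ne {j j' : n} (h : j ≠ j') (i k : n) (a b : A) (x : K) :
    ρ (single i j a) (ρ (single j' k b) x) = 0 := by
  rw [← mul_apply_eq_comp, ← map_mul, single_mul_single_of_ne _ _ _ _ h,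
    map_zero, _root_.zero_apply]

theorem sum_map_single_one_apply (x : K) : ∑ i, ρ (single i i (1 : A)) x = x := by
  rw [← _root_.sum_apply, ← map_sum, sum_single_one, map_one, one_apply_eq_self]

theorem inner_map_single_one (i j : n) (ξ η : K) :
    inner ℂ (ρ (single i j (1 : A)) ξ) (ρ (single i j (1 : A)) η) =
      inner ℂ ξ (ρ (single j j (1 : A)) η) := by
  rw [← ContinuousLinearMap.adjoint_inner_right, ← ContinuousLinearMap.star_eq_adjoint, ← map_star,
    star_eq_conjTranspose, conjTranspose_single, star_one, map_single_apply_map_single, one_mul]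

end MatrixUnits

section Corner

variable {A : Type*} [CStarAlgebra A] {n : ℕ}
  {K : Type*} [NormedAddCommGroup K] [InnerProductSpace ℂ K] [CompleteSpace K]
  (ρ : Matrix (Fin n) (Fin n) A →⋆ₐ[ℂ] (K →L[ℂ] K)) (i0 : Fin n)

theorem map_single_apply_mem_cornerRange (j : Fin n) (a : A) (x : K) :
    ρ (single i0 j a) x ∈ cornerRange ρ i0 :=
  ⟨ρ (single i0 j a) x, by simp [map_single_apply_map_single]⟩

theorem map_single_one_apply_of_mem_cornerRange {x : K} (hx : x ∈ cornerRange ρ i0) :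
    ρ (single i0 i0 (1 : A)) x = x := by
  obtain ⟨y, rfl⟩ := hx
  simp [map_single_apply_map_single]

noncomputable def cornerDecomposition : K →ₗ[ℂ] PiLp 2 (fun _ : Fin n => cornerRange ρ i0) :=
  (WithLp.linearEquiv 2 ℂ _).symm.toLinearMap ∘ₗ
    LinearMap.pi fun i => ((ρ (single i0 i (1 : A)) : K →ₗ[ℂ] K).codRestrict _
      (map_single_apply_mem_cornerRange ρ i0 i 1))

@[simp]
theorem cornerDecomposition_apply_coe (ξ : K) (i : Fin n) :
    (cornerDecomposition ρ i0 ξ i : K) = ρ (single i0 i (1 : A)) ξ :=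
  rfl

theorem inner_cornerDecomposition (ξ η : K) :
    inner ℂ (cornerDecomposition ρ i0 ξ) (cornerDecomposition ρ i0 η) = inner ℂ ξ η := by
  simp only [PiLp.inner_apply, Submodule.coe_inner, cornerDecomposition_apply_coe,
    inner_map_single_one, ← inner_sum, sum_map_single_one_apply]

theorem cornerDecomposition_surjective : Function.Surjective (cornerDecomposition ρ i0) := by
  intro h
  refine ⟨∑ j, ρ (single j i0 (1 : A)) (h j), PiLp.ext fun i => Subtype.ext ?_⟩
  rw [cornerDecomposition_apply_coe, map_sum, Finset.sum_eq_single i]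
  · rw [map_single_apply_map_single, one_mul]
    exact map_single_one_apply_of_mem_cornerRange ρ i0 (h i).2
  · exact fun j _ hj => map_single_apply_map_single_of_ne ρ (Ne.symm hj) _ _ _ _ _
  · simp

noncomputable def cornerUnitary : K ≃ₗᵢ[ℂ] PiLp 2 (fun _ : Fin n => cornerRange ρ i0) :=
  .ofSurjective ((cornerDecomposition ρ i0).isometryOfInner (inner_cornerDecomposition ρ i0))
    (cornerDecomposition_surjective ρ i0)

@[simp]
theorem cornerUnitary_apply (ξ : K) : cornerUnitary ρ i0 ξ = cornerDecomposition ρ i0 ξ :=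
  rfl

theorem cornerUnitary_map_apply (C : Matrix (Fin n) (Fin n) A) (ξ : K) (i : Fin n) :
    (cornerUnitary ρ i0 (ρ C ξ) i : K) =
      ∑ j, ρ (single i0 i0 (C i j)) (cornerUnitary ρ i0 ξ j : K) := by
  have corner_entry (j : Fin n) :
      single i0 j (C i j) = single i0 i (1 : A) * C * single j j (1 : A) := by
    rw [single_mul_mul_single, one_mul, mul_one]
  simp only [cornerUnitary_apply, cornerDecomposition_apply_coe, map_single_apply_map_single,
    mul_one, corner_entry]
  rw [← _root_.sum_apply, ← map_sum, ← Finset.mul_sum, sum_single_one, mul_one, map_mul,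
    mul_apply_eq_comp]

end Corner

/-- Let `A` be a unital C*-algebra, `n > 0`, and `(K, ρ)` a unital *-representation of
`M_n(A)`.  Let `E_jk` be the standard matrix units, `H = ρ(E₁₁)K`, and let `π` be the
representation of `A` on `H` obtained by restricting `ρ(a ⊗ E₁₁)` (the subspace `H` is
invariant under each `ρ(a ⊗ E₁₁)`).  Then `(K, ρ)` is unitarily equivalent to
`(H^⊕n, π_n)`: there is a unitary `W : K → H^⊕n` such that `W ρ(C) W*` is the operator
matrix `(π(C_jk))` acting on `H^⊕n`, i.e. `(W(ρ(C)ξ))ᵢ = ∑ⱼ ρ(C_ij ⊗ E₁₁)((Wξ)ⱼ)` for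
all `C`, `ξ`, `i`. -/
theorem representation_of_matrix_algebra_unitarily_equivalent_to_ampliation
    {A : Type*} [CStarAlgebra A] {n : ℕ} (hn : 0 < n)
    {K : Type*} [NormedAddCommGroup K] [InnerProductSpace ℂ K] [CompleteSpace K]
    (ρ : Matrix (Fin n) (Fin n) A →⋆ₐ[ℂ] (K →L[ℂ] K)) :
    (∀ (a : A) (x : K), x ∈ cornerRange ρ ⟨0, hn⟩ →
      ρ (Matrix.single ⟨0, hn⟩ ⟨0, hn⟩ a) x ∈ cornerRange ρ ⟨0, hn⟩) ∧
    ∃ W : K ≃ₗᵢ[ℂ] PiLp 2 (fun _ : Fin n => ↥(cornerRange ρ ⟨0, hn⟩)),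
      ∀ (C : Matrix (Fin n) (Fin n) A) (ξ : K) (i : Fin n),
        ((W (ρ C ξ)) i : K) =
          ∑ j : Fin n,
            ρ (Matrix.single ⟨0, hn⟩ ⟨0, hn⟩ (C i j)) ((W ξ) j : K) :=
  ⟨fun a x _ => map_single_apply_mem_cornerRange ρ _ _ a x,
    cornerUnitary ρ _, cornerUnitary_map_apply ρ _⟩
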